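/- arXiv:1707.09677 — 8 statements merged into one kernel-verified Lean document; each statement's English description precedes it below -/
import Mathlib

section
/- Let m ≥ n ≥ 0 be integers and a ∈ ℂ. Then for every square-summable sequence (u_k)_{k≥0} of complex numbers, |a|²·( Σ_{k=0}^{∞} (m+k−n+1)/(m+k+1)²·|u_k|² − Σ_{k=m−n}^{∞} (n+k−m+1)/(n+k+1)²·|u_k|² ) ≥ 0. (Theorem: the Toeplitz operator with symbol a·z^m·z̄^n, m ≥ n, acting on the Bergman space is hyponormal.) -/
/-!
Both series weight `|u_j|²` by `(p + j - q + 1) / (p + j + 1)²`, with `(p, q) = (m, n)` in the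
first and `(p, q) = (n, m)` in the second, where `j = k + (m - n)` runs over `j ≥ m - n`. For such
`j` swapping `p` and `q` only increases the weight, so the second series is dominated term by term
by the tail of the first, and the first has nonnegative terms.
-/

noncomputable def monomialWeight (p q x : ℝ) : ℝ := (p + x - q + 1) / (p + x + 1) ^ 2

lemma monomialWeight_nonneg {p q x : ℝ} (h : q ≤ p + x + 1) : 0 ≤ monomialWeight p q x := by
  unfold monomialWeight
  exact div_nonneg (by linarith) (sq_nonneg _)

lemma monomialWeight_le_one {p q x : ℝ} (hq : 0 ≤ q) (hx : 0 ≤ p + x) :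
    monomialWeight p q x ≤ 1 := by
  unfold monomialWeight
  rw [div_le_one (by positivity)]
  nlinarith

lemma monomialWeight_le_swap {m n j : ℝ} (hn : 0 ≤ n) (hnm : n ≤ m) (hj : m - n ≤ j) :
    monomialWeight n m j ≤ monomialWeight m n j := by
  unfold monomialWeight
  -- with `s = j + n - m + 1 ≥ 1` and `d = m - n`, this reads `s / (s + m)² ≤ (s + 2d) / (s + m + d)²`
  obtain ⟨s, hs, rfl⟩ : ∃ s, 1 ≤ s ∧ j = s + m - n - 1 := ⟨j + n - m + 1, by linarith, by ring⟩
  obtain ⟨d, hd, rfl⟩ : ∃ d, 0 ≤ d ∧ m = n + d := ⟨m - n, by linarith, by ring⟩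
  have hs0 : 0 ≤ s := by linarith
  rw [div_le_div_iff₀ (by nlinarith) (by nlinarith)]
  nlinarith [mul_nonneg hd hn, mul_nonneg (mul_nonneg hd hn) hs0, mul_nonneg hd hs0,
    mul_nonneg (mul_nonneg hd hd) hn, mul_nonneg (mul_nonneg hd hn) hn]

/-- The Toeplitz operator with symbol `a·z^m·z̄^n`, `m ≥ n`, acting on the Bergman
space is hyponormal: its self-commutator quadratic form, expressed in the monomial
basis coefficients `u_k`, is nonnegative. -/
theorem monomial_hyponormal (m n : ℕ) (h : n ≤ m) (a : ℂ) (u : ℕ → ℂ)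
    (hu : Summable fun k : ℕ => ‖u k‖ ^ 2) :
    0 ≤ ‖a‖ ^ 2 *
      ((∑' k : ℕ, ((m : ℝ) + k - n + 1) / ((m : ℝ) + k + 1) ^ 2 * ‖u k‖ ^ 2)
        - ∑' k : ℕ, ((n : ℝ) + (k + (m - n) : ℕ) - m + 1)
            / ((n : ℝ) + (k + (m - n) : ℕ) + 1) ^ 2 * ‖u (k + (m - n))‖ ^ 2) := by
  set d := m - n with hd
  have hmn : (n : ℝ) ≤ m := by exact_mod_cast h
  have hshift : ∀ k : ℕ, (m : ℝ) - n ≤ (k + d : ℕ) := fun k => by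
    push_cast [hd, Nat.cast_sub h]
    linarith [(k.cast_nonneg : (0 : ℝ) ≤ k)]
  set f : ℕ → ℝ := fun j => monomialWeight m n j * ‖u j‖ ^ 2
  set g : ℕ → ℝ := fun k => monomialWeight n m (k + d : ℕ) * ‖u (k + d)‖ ^ 2
  have hf0 : ∀ j, 0 ≤ f j := fun j =>
    mul_nonneg (monomialWeight_nonneg (by linarith [(j.cast_nonneg : (0 : ℝ) ≤ j)])) (sq_nonneg _)
  have hg0 : ∀ k, 0 ≤ g k := fun k =>
    mul_nonneg (monomialWeight_nonneg (by linarith [hshift k])) (sq_nonneg _)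
  have hf : Summable f := .of_nonneg_of_le hf0 (fun j =>
    mul_le_of_le_one_left (sq_nonneg _) (monomialWeight_le_one (by positivity) (by positivity))) hu
  have hgf : ∀ k, g k ≤ f (k + d) := fun k =>
    mul_le_mul_of_nonneg_right
      (monomialWeight_le_swap (by positivity) hmn (hshift k)) (sq_nonneg _)
  have hg : Summable g := .of_nonneg_of_le hg0 hgf (hf.comp_injective (add_left_injective d))
  have hgf_sum : ∑' k, g k ≤ ∑' j, f j :=
    hg.tsum_le_tsum_of_inj _ (add_left_injective d) (fun j _ => hf0 j) hgf hf
  exact mul_nonneg (sq_nonneg _) (sub_nonneg.2 hgf_sum)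
end

section
/- For a real number C, define Q_C on square-summable complex sequences (u_k)_{k≥0} by Q_C(u) = Σ_{k=0}^{∞} ( (k+1)/(k+2) − k/(k+1) )·|u_k|² + 2C·Σ_{k=0}^{∞} √((k+1)/(k+2))·( (k+2)/(k+3) − (k+1)/(k+2) )·Re(u_k·conj(u_{k+1})). Then for the sequence u with u_0 = u_1 = 1/2 and u_k = 0 for k ≥ 2, one has Q_C(u) = 1/6 + C/(12√2); in particular, for every C < −2√2 there exists a square-summable sequence u with Q_C(u) < 0. (Example: the Toeplitz operator T_{z + C|z|²} on the Bergman space is not hyponormal when C < −2√2.) -/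
/-- The self-commutator quadratic form of the Toeplitz operator `T_{z + C|z|²}`
on the Bergman space, in the orthonormal basis coefficients `u_k`. -/
noncomputable def commutatorForm (C : ℝ) (u : ℕ → ℂ) : ℝ :=
  (∑' k : ℕ, (((k : ℝ) + 1) / ((k : ℝ) + 2) - (k : ℝ) / ((k : ℝ) + 1)) * ‖u k‖ ^ 2)
    + 2 * C * ∑' k : ℕ, Real.sqrt (((k : ℝ) + 1) / ((k : ℝ) + 2))
        * (((k : ℝ) + 2) / ((k : ℝ) + 3) - ((k : ℝ) + 1) / ((k : ℝ) + 2))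
        * (u k * starRingEnd ℂ (u (k + 1))).re

/-- The Toeplitz operator `T_{z + C|z|²}` on the Bergman space is not hyponormal when
`C < -2√2`: for the test sequence `u₀ = u₁ = 1/2`, `u_k = 0` for `k ≥ 2`, the
self-commutator form evaluates to `1/6 + C/(12√2)`; in particular for every
`C < -2√2` there is a square-summable sequence on which the form is negative. -/
theorem toeplitz_z_plus_C_absSq_not_hyponormal (C : ℝ) :
    commutatorForm C (fun k : ℕ => if k ≤ 1 then (1 / 2 : ℂ) else 0)
        = 1 / 6 + C / (12 * Real.sqrt 2)
      ∧ (C < -2 * Real.sqrt 2 →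
          ∃ u : ℕ → ℂ, (Summable fun k : ℕ => ‖u k‖ ^ 2) ∧ commutatorForm C u < 0) := by
  set u : ℕ → ℂ := fun k : ℕ => if k ≤ 1 then (1 / 2 : ℂ) else 0 with hu
  have hval : commutatorForm C u = 1 / 6 + C / (12 * Real.sqrt 2) := by
    have h1 : (∑' k : ℕ, (((k : ℝ) + 1) / ((k : ℝ) + 2) - (k : ℝ) / ((k : ℝ) + 1)) * ‖u k‖ ^ 2)
        = ∑ k ∈ Finset.range 2, (((k : ℝ) + 1) / ((k : ℝ) + 2) - (k : ℝ) / ((k : ℝ) + 1)) * ‖u k‖ ^ 2 := by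
      apply tsum_eq_sum
      intro k hk
      simp only [Finset.mem_range] at hk
      have : ¬ (k ≤ 1) := by omega
      simp [hu, this]
    have h2 : (∑' k : ℕ, Real.sqrt (((k : ℝ) + 1) / ((k : ℝ) + 2))
        * (((k : ℝ) + 2) / ((k : ℝ) + 3) - ((k : ℝ) + 1) / ((k : ℝ) + 2))
        * (u k * starRingEnd ℂ (u (k + 1))).re)
        = ∑ k ∈ Finset.range 1, Real.sqrt (((k : ℝ) + 1) / ((k : ℝ) + 2))
        * (((k : ℝ) + 2) / ((k : ℝ) + 3) - ((k : ℝ) + 1) / ((k : ℝ) + 2))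
        * (u k * starRingEnd ℂ (u (k + 1))).re := by
      apply tsum_eq_sum
      intro k hk
      simp only [Finset.mem_range] at hk
      have : ¬ (k + 1 ≤ 1) := by omega
      simp [hu, this]
    rw [commutatorForm, h1, h2]
    simp only [Finset.sum_range_succ, Finset.sum_range_zero, hu]
    norm_num
    have h2pos : (0:ℝ) < Real.sqrt 2 := by positivity
    field_simp
    ring
  refine ⟨hval, fun hC => ⟨u, ?_, ?_⟩⟩
  · apply summable_of_ne_finset_zero (s := Finset.range 2)
    intro k hk
    simp only [Finset.mem_range] at hk
    have : ¬ (k ≤ 1) := by omega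
    simp [hu, this]
  · rw [hval]
    have h2pos : (0:ℝ) < Real.sqrt 2 := by positivity
    have hlt : C / (12 * Real.sqrt 2) < (-2 * Real.sqrt 2) / (12 * Real.sqrt 2) :=
      (div_lt_div_iff_of_pos_right (by positivity)).mpr hC
    have heq : (-2 * Real.sqrt 2) / (12 * Real.sqrt 2) = -(1/6) := by
      rw [div_eq_iff (by positivity)]
      have := Real.mul_self_sqrt (le_of_lt (by norm_num : (0:ℝ) < 2))
      nlinarith
    rw [heq] at hlt
    linarith
end

section
/- Let δ ≥ 1 and k ≥ 1 be integers, let n₁, …, n_k ≥ 0 be integers with m_l = n_l + δ for each l, and let r₁, …, r_k ≥ 0 be real numbers. Then for every integer α ≥ δ: Σ_{l=1}^{k} r_l/(α+m_l+1) ≥ √((α−δ+1)/(α+δ+1)) · Σ_{l=1}^{k} r_l/(α+n_l+1). (Corollary: if φ(z) = a₁z^{m₁}z̄^{n₁} + … + a_kz^{m_k}z̄^{n_k} with m₁−n₁ = … = m_k−n_k = δ ≥ 0 and all coefficients a_l lying on the same ray from the origin, then the Toeplitz operator T_φ on the Bergman space is hyponormal.) -/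
/-- Corollary: a polynomial of fixed relative degree `δ` whose coefficients all lie on
the same ray from the origin yields a hyponormal Toeplitz operator on the Bergman
space; via the Liu–Lu criterion this reduces to the displayed real inequality. -/
theorem same_ray_hyponormal (δ k : ℕ) (hδ : 1 ≤ δ) (hk : 1 ≤ k)
    (n m : Fin k → ℕ) (hm : ∀ l : Fin k, m l = n l + δ)
    (r : Fin k → ℝ) (hr : ∀ l : Fin k, 0 ≤ r l) (α : ℕ) (hα : δ ≤ α) :
    ∑ l : Fin k, r l / ((α : ℝ) + m l + 1)
      ≥ Real.sqrt (((α : ℝ) - δ + 1) / ((α : ℝ) + δ + 1))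
        * ∑ l : Fin k, r l / ((α : ℝ) + n l + 1) := by
  have hδα : (δ : ℝ) ≤ (α : ℝ) := by exact_mod_cast hα
  have hδ1 : (1 : ℝ) ≤ (δ : ℝ) := by exact_mod_cast hδ
  rw [ge_iff_le, Finset.mul_sum]
  apply Finset.sum_le_sum
  intro l _
  have hml : (m l : ℝ) = (n l : ℝ) + δ := by
    have := hm l; exact_mod_cast congrArg (Nat.cast : ℕ → ℝ) this
  set N : ℝ := (α : ℝ) + (n l : ℝ) + 1 with hN
  have hNpos : 0 < N := by positivity
  have hMeq : (α : ℝ) + (m l : ℝ) + 1 = N + δ := by rw [hml]; ring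
  have hMpos : 0 < N + (δ : ℝ) := by positivity
  have hsqrt : Real.sqrt (((α : ℝ) - δ + 1) / ((α : ℝ) + δ + 1)) ≤ N / (N + δ) := by
    have h1 : ((α : ℝ) - δ + 1) / ((α : ℝ) + δ + 1) ≤ (N / (N + δ)) ^ 2 := by
      rw [div_pow, div_le_div_iff₀ (by positivity) (by positivity)]
      have hn0 : (0 : ℝ) ≤ (n l : ℝ) := Nat.cast_nonneg _
      have hδ0 : (0:ℝ) ≤ (δ:ℝ) := by positivity
      nlinarith [mul_nonneg hn0 hMpos.le, sq_nonneg ((δ:ℝ)),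
        mul_nonneg hδ0 (mul_nonneg hn0 hMpos.le),
        mul_nonneg (sq_nonneg ((δ:ℝ))) (le_of_lt (show (0:ℝ) < (α:ℝ)+δ+1 by positivity))]
    calc Real.sqrt (((α : ℝ) - δ + 1) / ((α : ℝ) + δ + 1))
        ≤ Real.sqrt ((N / (N + δ)) ^ 2) := Real.sqrt_le_sqrt h1
      _ = N / (N + δ) := Real.sqrt_sq (by positivity)
  have hr0 : 0 ≤ r l / N := div_nonneg (hr l) hNpos.le
  calc Real.sqrt (((α : ℝ) - δ + 1) / ((α : ℝ) + δ + 1)) * (r l / N)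
      ≤ (N / (N + δ)) * (r l / N) := mul_le_mul_of_nonneg_right hsqrt hr0
    _ = r l / (N + δ) := by field_simp
    _ = r l / ((α : ℝ) + m l + 1) := by rw [hMeq]
end

section
/- Let δ ≥ 0 and m, n, i, j ≥ 0 be integers with m−n = i−j = δ, and let a₁, a₂ be complex numbers with Re(a₁·conj(a₂)) ≥ 0 (i.e. a₁ and a₂ lie in a common quarter-plane). Then for every integer α ≥ δ: |a₁/(α+m+1) + a₂/(α+i+1)|² ≥ ((α−δ+1)/(α+δ+1)) · |a₁/(α+n+1) + a₂/(α+j+1)|². (Theorem: if φ(z) = a₁z^m z̄^n + a₂z^i z̄^j with m−n = i−j = δ ≥ 0 and |arg(a₁) − arg(a₂)| ≤ π/2, then the Toeplitz operator T_φ on the Bergman space is hyponormal.) -/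
/-!
For real weights, `‖x a + y b‖² = x²|a|² + y²|b|² + 2xy Re(a b̄)`, so when `Re(a b̄) ≥ 0` the norm
is monotone in nonnegative weights. With `c = (α-δ+1)/(α+δ+1)` and `u = α + 1`, it therefore
suffices to compare weights coefficientwise: `√c / (u + k) ≤ 1 / (u + k + δ)` for `k ≥ 0`,
which after squaring is the polynomial inequality `(u - δ)(t + δ)² ≤ (u + δ)t²` for `t = u + k`.
-/

open Complex ComplexConjugate

theorem Complex.sq_norm_ofReal_mul_add_ofReal_mul (x y : ℝ) (a b : ℂ) :
    ‖(x : ℂ) * a + y * b‖ ^ 2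
      = x ^ 2 * normSq a + y ^ 2 * normSq b + 2 * (x * y) * (a * conj b).re := by
  rw [Complex.sq_norm, normSq_add, normSq_mul, normSq_mul, normSq_ofReal, normSq_ofReal, map_mul,
    conj_ofReal, mul_mul_mul_comm, ← ofReal_mul, re_ofReal_mul]
  ring

theorem Complex.norm_ofReal_mul_add_ofReal_mul_le_of_re_mul_conj_nonneg {a b : ℂ}
    (hab : 0 ≤ (a * conj b).re) {x x' y y' : ℝ} (hx : 0 ≤ x) (hxx' : x ≤ x') (hy : 0 ≤ y)
    (hyy' : y ≤ y') :
    ‖(x : ℂ) * a + y * b‖ ≤ ‖(x' : ℂ) * a + y' * b‖ := by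
  rw [← sq_le_sq₀ (norm_nonneg _) (norm_nonneg _), sq_norm_ofReal_mul_add_ofReal_mul,
    sq_norm_ofReal_mul_add_ofReal_mul]
  gcongr
  all_goals first | exact normSq_nonneg _ | linarith

theorem sub_mul_add_add_sq_le_add_mul_add_sq {u d x : ℝ} (hu : 0 ≤ u) (hd : 0 ≤ d) (hx : 0 ≤ x) :
    (u - d) * (u + x + d) ^ 2 ≤ (u + d) * (u + x) ^ 2 := by
  nlinarith [mul_nonneg hd (mul_nonneg hx (add_nonneg hu hx)),
    mul_nonneg hd (mul_nonneg hd (add_nonneg hu hx)), mul_nonneg hd (mul_nonneg hd hx),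
    pow_nonneg hd 3]

theorem sqrt_sub_div_add_div_le {u d x : ℝ} (hu : 0 < u) (hd : 0 ≤ d) (hx : 0 ≤ x) :
    √((u - d) / (u + d)) / (u + x) ≤ 1 / (u + x + d) := by
  rw [div_le_div_iff₀ (by positivity) (by positivity), one_mul, ← le_div_iff₀ (by positivity),
    Real.sqrt_le_iff, div_pow, div_le_div_iff₀ (by positivity) (by positivity)]
  exact ⟨by positivity, by linarith [sub_mul_add_add_sq_le_add_mul_add_sq hu.le hd hx]⟩

/-- A binomial symbol of fixed relative degree `δ` whose two coefficients lie in a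
common quarter-plane (`Re(a₁·conj a₂) ≥ 0`) yields a hyponormal Toeplitz operator on
the Bergman space; via the Liu–Lu criterion this is the displayed inequality. -/
theorem quarter_plane_binomial_hyponormal (δ m n i j : ℕ)
    (hm : m = n + δ) (hi : i = j + δ) (a₁ a₂ : ℂ)
    (hre : 0 ≤ (a₁ * starRingEnd ℂ a₂).re) (α : ℕ) (hα : δ ≤ α) :
    ‖a₁ / ((α : ℂ) + m + 1) + a₂ / ((α : ℂ) + i + 1)‖ ^ 2
      ≥ (((α : ℝ) - δ + 1) / ((α : ℝ) + δ + 1))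
        * ‖a₁ / ((α : ℂ) + n + 1) + a₂ / ((α : ℂ) + j + 1)‖ ^ 2 := by
  subst hm hi
  set c : ℝ := ((α : ℝ) - δ + 1) / ((α : ℝ) + δ + 1)
  have hc : 0 ≤ c := div_nonneg (by linarith [(Nat.cast_le.mpr hα : (δ : ℝ) ≤ α)]) (by positivity)
  have hscale (z : ℂ) : c * ‖z‖ ^ 2 = ‖(√c : ℂ) * z‖ ^ 2 := by
    rw [norm_mul, Complex.norm_real, Real.norm_of_nonneg (Real.sqrt_nonneg c), mul_pow,
      Real.sq_sqrt hc]
  have hcoeff (k : ℕ) : √c / (α + 1 + k) ≤ 1 / (α + 1 + k + δ) := by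
    rw [show c = (α + 1 - δ) / (α + 1 + δ) by ring]
    exact sqrt_sub_div_add_div_le (by positivity) (by positivity) (by positivity)
  calc c * ‖a₁ / ((α : ℂ) + n + 1) + a₂ / ((α : ℂ) + j + 1)‖ ^ 2
      = ‖((√c / (α + 1 + n) : ℝ) : ℂ) * a₁ + ((√c / (α + 1 + j) : ℝ) : ℂ) * a₂‖ ^ 2 := by
        rw [hscale]
        push_cast
        ring_nf
    _ ≤ ‖((1 / (α + 1 + n + δ) : ℝ) : ℂ) * a₁ + ((1 / (α + 1 + j + δ) : ℝ) : ℂ) * a₂‖ ^ 2 := by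
        gcongr
        exact Complex.norm_ofReal_mul_add_ofReal_mul_le_of_re_mul_conj_nonneg hre
          (by positivity) (hcoeff n) (by positivity) (hcoeff j)
    _ = ‖a₁ / ((α : ℂ) + (n + δ : ℕ) + 1) + a₂ / ((α : ℂ) + (j + δ : ℕ) + 1)‖ ^ 2 := by
        push_cast
        ring_nf
end

section
/- Let δ ≥ 0 and k ≥ 1 be integers, let n₁, …, n_k ≥ 0 be integers with m_l = n_l + δ for each l, and suppose the complex coefficients a₁, …, a_k all lie in a common (closed) quarter-plane: there exist θ₀ ∈ ℝ, reals r_l ≥ 0, and angles θ_l ∈ [0, π/2] such that a_l = r_l·e^{i(θ₀+θ_l)} for each l. Then for every integer α ≥ δ: |Σ_{l=1}^{k} a_l/(α+m_l+1)|² ≥ ((α−δ+1)/(α+δ+1)) · |Σ_{l=1}^{k} a_l/(α+n_l+1)|². (Theorem: if φ(z) = a₁z^{m₁}z̄^{n₁} + … + a_kz^{m_k}z̄^{n_k} with m₁−n₁ = … = m_k−n_k = δ ≥ 0 and max_{l,l'} |arg(a_l) − arg(a_{l'})| ≤ π/2, then the Toeplitz operator T_φ on the Bergman space is hyponormal.)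 -/
/-!
Rotating by `e^{-iθ₀}` puts every coefficient in the closed first quadrant, a convex cone any two
of whose vectors make an angle at most `π/2`; hence `‖z‖ ≤ ‖z + w‖` for `z, w` in it. With
`t = (α+1)/(α+δ+1)` one has `t/(α+n+1) ≤ 1/(α+n+δ+1)`, so the `m`-sum is `t` times the `n`-sum
plus an element of the quadrant, giving `t·‖n-sum‖ ≤ ‖m-sum‖`. Finally
`(α-δ+1)/(α+δ+1) ≤ t²` because `(α+1)² - δ² ≤ (α+1)²`.
-/

open Complex Finset

namespace Complex

def closedFirstQuadrant : PointedCone ℝ ℂ where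
  carrier := {z | 0 ≤ z.re ∧ 0 ≤ z.im}
  add_mem' hz hw := ⟨add_nonneg hz.1 hw.1, add_nonneg hz.2 hw.2⟩
  zero_mem' := ⟨le_rfl, le_rfl⟩
  smul_mem' c z hz := by
    change 0 ≤ ((c : ℝ) • z).re ∧ 0 ≤ ((c : ℝ) • z).im
    rw [real_smul, re_ofReal_mul, im_ofReal_mul]
    exact ⟨mul_nonneg c.2 hz.1, mul_nonneg c.2 hz.2⟩

theorem mem_closedFirstQuadrant {z : ℂ} : z ∈ closedFirstQuadrant ↔ 0 ≤ z.re ∧ 0 ≤ z.im :=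
  Iff.rfl

theorem ofReal_mul_exp_mem_closedFirstQuadrant {r θ : ℝ} (hr : 0 ≤ r)
    (hθ : θ ∈ Set.Icc 0 (Real.pi / 2)) : (r : ℂ) * exp (θ * I) ∈ closedFirstQuadrant := by
  rw [mem_closedFirstQuadrant, re_ofReal_mul, im_ofReal_mul, exp_ofReal_mul_I_re,
    exp_ofReal_mul_I_im]
  exact ⟨mul_nonneg hr (Real.cos_nonneg_of_mem_Icc ⟨by linarith [Real.pi_pos, hθ.1], hθ.2⟩),
    mul_nonneg hr (Real.sin_nonneg_of_nonneg_of_le_pi hθ.1 (by linarith [Real.pi_pos, hθ.2]))⟩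

theorem norm_le_norm_add_of_mem_closedFirstQuadrant {z w : ℂ} (hz : z ∈ closedFirstQuadrant)
    (hw : w ∈ closedFirstQuadrant) : ‖z‖ ≤ ‖z + w‖ := by
  obtain ⟨hzr, hzi⟩ := hz
  obtain ⟨hwr, hwi⟩ := hw
  rw [← sq_le_sq₀ (norm_nonneg _) (norm_nonneg _), Complex.sq_norm, Complex.sq_norm,
    normSq_apply, normSq_apply, add_re, add_im]
  nlinarith [mul_nonneg hzr hwr, mul_nonneg hzi hwi, mul_self_nonneg w.re, mul_self_nonneg w.im]

theorem norm_sum_smul_le_of_mem_closedFirstQuadrant {ι : Type*} (s : Finset ι) {b : ι → ℂ}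
    (hb : ∀ i ∈ s, b i ∈ closedFirstQuadrant) {p q : ι → ℝ} (hq : ∀ i ∈ s, 0 ≤ q i)
    (hqp : ∀ i ∈ s, q i ≤ p i) : ‖∑ i ∈ s, q i • b i‖ ≤ ‖∑ i ∈ s, p i • b i‖ := by
  have hsplit : ∑ i ∈ s, p i • b i = ∑ i ∈ s, q i • b i + ∑ i ∈ s, (p i - q i) • b i := by
    rw [← sum_add_distrib]
    exact sum_congr rfl fun i _ => by rw [← add_smul, add_sub_cancel]
  rw [hsplit]
  exact norm_le_norm_add_of_mem_closedFirstQuadrant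
    (Submodule.sum_mem _ fun i hi => closedFirstQuadrant.smul_mem (hq i hi) (hb i hi))
    (Submodule.sum_mem _ fun i hi =>
      closedFirstQuadrant.smul_mem (sub_nonneg.2 (hqp i hi)) (hb i hi))

end Complex

theorem div_mul_inv_le_inv_add {α δ j : ℝ} (hα : 0 ≤ α) (hδ : 0 ≤ δ) (hj : 0 ≤ j) :
    (α + 1) / (α + δ + 1) * (α + j + 1)⁻¹ ≤ (α + j + δ + 1)⁻¹ := by
  rw [← div_eq_mul_inv, div_div, inv_eq_one_div, div_le_div_iff₀ (by positivity) (by positivity)]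
  nlinarith [mul_nonneg hδ hj]

theorem sub_add_one_div_le_sq_div {α δ : ℝ} (h : 0 < α + δ + 1) :
    (α - δ + 1) / (α + δ + 1) ≤ ((α + 1) / (α + δ + 1)) ^ 2 := by
  rw [div_pow, div_le_div_iff₀ h (by positivity)]
  nlinarith [sq_nonneg δ]

theorem quarter_plane_polynomial_hyponormal_general (δ k : ℕ)
    (n m : Fin k → ℕ) (hm : ∀ l : Fin k, m l = n l + δ)
    (a : Fin k → ℂ) (θ₀ : ℝ) (r : Fin k → ℝ) (θ : Fin k → ℝ)
    (hr : ∀ l : Fin k, 0 ≤ r l)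
    (hθ : ∀ l : Fin k, θ l ∈ Set.Icc (0 : ℝ) (Real.pi / 2))
    (ha : ∀ l : Fin k, a l = (r l : ℂ) * Complex.exp (((θ₀ + θ l : ℝ) : ℂ) * Complex.I))
    (α : ℕ) :
    ‖∑ l : Fin k, a l / ((α : ℂ) + m l + 1)‖ ^ 2
      ≥ (((α : ℝ) - δ + 1) / ((α : ℝ) + δ + 1))
        * ‖∑ l : Fin k, a l / ((α : ℂ) + n l + 1)‖ ^ 2 := by
  set b : Fin k → ℂ := fun l => (r l : ℂ) * exp ((θ l : ℂ) * I)
  have hrotate : ∀ d : Fin k → ℕ, ‖∑ l, a l / ((α : ℂ) + d l + 1)‖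
      = ‖∑ l, ((α : ℝ) + d l + 1)⁻¹ • b l‖ := fun d => by
    have hterm : ∀ l, a l / ((α : ℂ) + d l + 1)
        = exp (θ₀ * I) * (((α : ℝ) + d l + 1)⁻¹ • b l) := fun l => by
      rw [ha, ofReal_add, add_mul, exp_add, real_smul]
      push_cast
      ring
    simp_rw [hterm, ← mul_sum, norm_mul, norm_exp_ofReal_mul_I, one_mul]
  set t : ℝ := (α + 1) / (α + δ + 1)
  have hmono : ‖∑ l, (t * ((α : ℝ) + n l + 1)⁻¹) • b l‖ ≤ ‖∑ l, ((α : ℝ) + m l + 1)⁻¹ • b l‖ :=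
    norm_sum_smul_le_of_mem_closedFirstQuadrant _
      (fun l _ => ofReal_mul_exp_mem_closedFirstQuadrant (hr l) (hθ l))
      (fun l _ => by positivity)
      (fun l _ => by
        rw [hm l, Nat.cast_add, ← add_assoc]
        exact div_mul_inv_le_inv_add α.cast_nonneg δ.cast_nonneg (n l).cast_nonneg)
  simp_rw [mul_smul, ← smul_sum, norm_smul, Real.norm_of_nonneg (by positivity : 0 ≤ t)] at hmono
  rw [hrotate m, hrotate n, ge_iff_le]
  calc _ ≤ t ^ 2 * ‖∑ l, ((α : ℝ) + n l + 1)⁻¹ • b l‖ ^ 2 := by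
        gcongr
        exact sub_add_one_div_le_sq_div (by positivity)
    _ ≤ _ := by
        rw [← mul_pow]
        gcongr

/-- A polynomial of fixed relative degree `δ` whose coefficients all lie in a common
closed quarter-plane (`a_l = r_l·e^{i(θ₀+θ_l)}` with `r_l ≥ 0`, `θ_l ∈ [0, π/2]`)
yields a hyponormal Toeplitz operator on the Bergman space; via the Liu–Lu criterion
this is the displayed inequality. -/
theorem quarter_plane_polynomial_hyponormal (δ k : ℕ) (hk : 1 ≤ k)
    (n m : Fin k → ℕ) (hm : ∀ l : Fin k, m l = n l + δ)
    (a : Fin k → ℂ) (θ₀ : ℝ) (r : Fin k → ℝ) (θ : Fin k → ℝ)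
    (hr : ∀ l : Fin k, 0 ≤ r l)
    (hθ : ∀ l : Fin k, θ l ∈ Set.Icc (0 : ℝ) (Real.pi / 2))
    (ha : ∀ l : Fin k, a l = (r l : ℂ) * Complex.exp (((θ₀ + θ l : ℝ) : ℂ) * Complex.I))
    (α : ℕ) (hα : δ ≤ α) :
    ‖∑ l : Fin k, a l / ((α : ℂ) + m l + 1)‖ ^ 2
      ≥ (((α : ℝ) - δ + 1) / ((α : ℝ) + δ + 1))
        * ‖∑ l : Fin k, a l / ((α : ℂ) + n l + 1)‖ ^ 2 :=
  quarter_plane_polynomial_hyponormal_general δ k n m hm a θ₀ r θ hr hθ ha α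
end

section
/- For every integer α ≥ 1 and every θ ∈ [0, π]: ( 1/(α+3) + cos θ/(10(α+4)) )² + sin²θ/(100(α+4)²) > (α/(α+2)) · [ ( 1/(α+2) + cos θ/(10(α+3)) )² + sin²θ/(100(α+3)²) ]. (Example: the Toeplitz operator with symbol φ_θ(z) = z²z̄ + (1/10)e^{iθ}z³z̄² on the Bergman space is hyponormal for every choice of θ.) -/
/-- The Toeplitz operator with symbol `φ_θ(z) = z²z̄ + (1/10)e^{iθ}z³z̄²` on the
Bergman space is hyponormal for every `θ`: the Liu–Lu criterion holds strictly for
all `α ≥ 1` and all `θ ∈ [0, π]`. -/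
theorem example_hyponormal_all_theta (α : ℕ) (hα : 1 ≤ α) (θ : ℝ)
    (hθ : θ ∈ Set.Icc (0 : ℝ) Real.pi) :
    (1 / ((α : ℝ) + 3) + Real.cos θ / (10 * ((α : ℝ) + 4))) ^ 2
        + Real.sin θ ^ 2 / (100 * ((α : ℝ) + 4) ^ 2)
      > ((α : ℝ) / ((α : ℝ) + 2))
        * ((1 / ((α : ℝ) + 2) + Real.cos θ / (10 * ((α : ℝ) + 3))) ^ 2
            + Real.sin θ ^ 2 / (100 * ((α : ℝ) + 3) ^ 2)) := by
  have ha : (1 : ℝ) ≤ (α : ℝ) := by exact_mod_cast hα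
  set a : ℝ := (α : ℝ)
  set c : ℝ := Real.cos θ
  have hc1 : -1 ≤ c := Real.neg_one_le_cos θ
  have hc2 : c ≤ 1 := Real.cos_le_one θ
  have hs : Real.sin θ ^ 2 = 1 - c ^ 2 := Real.sin_sq θ
  rw [hs]
  have h2 : (0:ℝ) < a + 2 := by linarith
  have h3 : (0:ℝ) < a + 3 := by linarith
  have h4 : (0:ℝ) < a + 4 := by linarith
  rw [gt_iff_lt, ← sub_pos]
  have key : ((1 / (a + 3) + c / (10 * (a + 4))) ^ 2 + (1 - c ^ 2) / (100 * (a + 4) ^ 2))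
      - (a / (a + 2)) * ((1 / (a + 2) + c / (10 * (a + 3))) ^ 2 + (1 - c ^ 2) / (100 * (a + 3) ^ 2))
      = (100*(a+2)^3*(a+4)^2 + 20*c*(a+2)^3*(a+3)*(a+4) + (a+2)^3*(a+3)^2
          - 100*a*(a+3)^2*(a+4)^2 - 20*c*a*(a+2)*(a+3)*(a+4)^2 - a*(a+2)^2*(a+4)^2)
        / (100*(a+2)^3*(a+3)^2*(a+4)^2) := by
    field_simp
    ring
  rw [key]
  apply div_pos
  · have hcc : (0:ℝ) ≤ 1 + c := by linarith
    nlinarith [mul_nonneg hcc (mul_pos (mul_pos h2 h3) h4).le, mul_pos h3 h4,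
      mul_pos h2 h4, sq_nonneg (a+4), mul_pos (mul_pos h2 h3) h4]
  · positivity
end

section
/- For all integers m > n ≥ 0 and all integers k ≥ m−n: ( (k+m−n+1)/(k+m+1)² − (k+n−m+1)/(k+n+1)² )·(k+1) ≤ 1/2. -/
/-- Second key inequality for the bound `‖[T_{z^m z̄^n}*, T_{z^m z̄^n}]‖ ≤ 1/2`:
the k-th diagonal coefficient for indices `k ≥ m − n` is at most `1/2`. -/
theorem diagonal_coefficient_le_half_high (m n k : ℕ) (h : n < m) (hk : m - n ≤ k) :
    (((k : ℝ) + m - n + 1) / ((k : ℝ) + m + 1) ^ 2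
        - ((k : ℝ) + n - m + 1) / ((k : ℝ) + n + 1) ^ 2) * ((k : ℝ) + 1)
      ≤ 1 / 2 := by
  have hb : (n : ℝ) + 1 ≤ (m : ℝ) := by exact_mod_cast h
  have hk' : (m : ℝ) - (n : ℝ) ≤ (k : ℝ) := by
    have := (Nat.cast_le (α := ℝ)).mpr hk
    rwa [Nat.cast_sub h.le] at this
  have hn : (0 : ℝ) ≤ (n : ℝ) := Nat.cast_nonneg n
  have hkk : (0 : ℝ) ≤ (k : ℝ) := Nat.cast_nonneg k
  set a := (k : ℝ)
  set b := (m : ℝ)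
  set c := (n : ℝ)
  have hA : (0 : ℝ) < a + b + 1 := by nlinarith
  have hB : (0 : ℝ) < a + c + 1 := by nlinarith
  rw [div_sub_div _ _ (by positivity) (by positivity), div_mul_eq_mul_div,
    div_le_iff₀ (by positivity)]
  nlinarith [mul_nonneg (mul_nonneg (by nlinarith [sq_nonneg (c - 1)] :
      (0:ℝ) ≤ (a + b + 1) ^ 2 - 4 * (b - c) * b) (by linarith : (0:ℝ) ≤ a + 1))
        (by linarith : (0:ℝ) ≤ a + c + 1),
    mul_nonneg (mul_nonneg (by linarith : (0:ℝ) ≤ (a + c + 1) - (a + 1))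
      (sq_nonneg (a + b + 1))) (by linarith : (0:ℝ) ≤ a + c + 1),
    mul_nonneg (mul_nonneg (sq_nonneg (b - c)) (by linarith : (0:ℝ) ≤ a + 1))
      (by linarith : (0:ℝ) ≤ (a + 1) - (b - c))]
end

section
/- Let m > n ≥ 0 be integers. Then for every square-summable sequence (u_k)_{k≥0} of complex numbers: Σ_{k=0}^{m−n−1} (k+m−n+1)(k+1)/(k+m+1)²·|u_k|² + Σ_{k=m−n}^{∞} ( (k+m−n+1)/(k+m+1)² − (k+n−m+1)/(k+n+1)² )·(k+1)·|u_k|² ≤ (1/2)·Σ_{k=0}^{∞} |u_k|². (Theorem: ‖[T_{z^m z̄^n}*, T_{z^m z̄^n}]‖ ≤ 1/2 for m > n, supporting the conjecture that ‖[T_φ*, T_φ]‖ ≤ Area(φ(𝔻))/(2π) for every hyponormal Toeplitz operator on the Bergman space.) -/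
/-!
Split the quadratic form at `k = m - n` and bound every coefficient by `1/2`. Writing
`a = k + 1` and `d = m - n`, the coefficient is `a (a + d) / (a + m)²` when `a ≤ d`, which is at
most `a / (a + d) ≤ 1/2` as `m ≥ d`. When `a ≥ d` it equals
`a d ((m + n)(a + n) + d m) / ((a + m)² (a + n)²)`, which is nonnegative, and it is at most `1/2`
by `(a + m)² ≥ 4 a m` together with `d ≤ a` and `d ≤ m`.
-/

lemma tsum_mul_le_mul_tsum_of_le {ι : Type*} {w x : ι → ℝ} {c : ℝ} (hw : ∀ i, 0 ≤ w i)
    (hwc : ∀ i, w i ≤ c) (hx : ∀ i, 0 ≤ x i) (hxs : Summable x) :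
    ∑' i, w i * x i ≤ c * ∑' i, x i := by
  have hle : ∀ i, w i * x i ≤ c * x i := fun i => mul_le_mul_of_nonneg_right (hwc i) (hx i)
  rw [← tsum_mul_left]
  exact Summable.tsum_le_tsum hle
    ((hxs.mul_left c).of_nonneg_of_le (fun i => mul_nonneg (hw i) (hx i)) hle) (hxs.mul_left c)

lemma head_coeff_le_half {j m n : ℝ} (hj : 0 ≤ j) (hn : 0 ≤ n) (hjmn : j + 1 ≤ m - n) :
    (j + m - n + 1) * (j + 1) / (j + m + 1) ^ 2 ≤ 1 / 2 := by
  rw [div_le_iff₀ (by nlinarith)]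
  nlinarith [mul_nonneg hn (by linarith : 0 ≤ 2 * (j + m - n + 1) + n)]

lemma tail_coeff_eq {j m n : ℝ} (hj : 0 ≤ j) (hn : 0 ≤ n) (hnm : n ≤ m) :
    ((j + m - n + 1) / (j + m + 1) ^ 2 - (j + n - m + 1) / (j + n + 1) ^ 2) * (j + 1)
      = (j + 1) * (m - n) * ((m + n) * (j + n + 1) + (m - n) * m)
        / ((j + m + 1) ^ 2 * (j + n + 1) ^ 2) := by
  have : j + m + 1 ≠ 0 := by linarith
  have : j + n + 1 ≠ 0 := by linarith
  field_simp
  ring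

lemma tail_coeff_nonneg {j m n : ℝ} (hj : 0 ≤ j) (hn : 0 ≤ n) (hnm : n ≤ m) :
    0 ≤ ((j + m - n + 1) / (j + m + 1) ^ 2 - (j + n - m + 1) / (j + n + 1) ^ 2) * (j + 1) := by
  rw [tail_coeff_eq hj hn hnm]
  have : 0 ≤ m - n := by linarith
  have : 0 ≤ m := by linarith
  have : 0 ≤ (m + n) * (j + n + 1) + (m - n) * m := by positivity
  positivity

lemma tail_coeff_le_half {j m n : ℝ} (hj : 0 ≤ j) (hn : 0 ≤ n) (hnm : n ≤ m)
    (hmnj : m - n ≤ j + 1) :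
    ((j + m - n + 1) / (j + m + 1) ^ 2 - (j + n - m + 1) / (j + n + 1) ^ 2) * (j + 1) ≤ 1 / 2 := by
  have hm : 0 ≤ m := by linarith
  have : 0 < j + m + 1 := by linarith
  have : 0 < j + n + 1 := by linarith
  rw [tail_coeff_eq hj hn hnm, div_le_iff₀ (by positivity)]
  have hamgm : 4 * (j + 1) * m ≤ (j + m + 1) ^ 2 := by nlinarith [sq_nonneg (j + 1 - m)]
  have hcross : (m - n) * (m + n) ≤ m * (j + n + 1) := by nlinarith
  have hsq : (m - n) ^ 2 ≤ (j + n + 1) ^ 2 := pow_le_pow_left₀ (by linarith) (by linarith) 2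
  have hd : (m - n) * ((m + n) * (j + n + 1) + (m - n) * m) ≤ 2 * m * (j + n + 1) ^ 2 := by
    nlinarith [mul_le_mul_of_nonneg_right hcross (by linarith : 0 ≤ j + n + 1),
      mul_le_mul_of_nonneg_left hsq hm]
  nlinarith [mul_le_mul_of_nonneg_left hd (by linarith : 0 ≤ 2 * (j + 1)),
    mul_le_mul_of_nonneg_right hamgm (sq_nonneg (j + n + 1))]

/-- `‖[T_{z^m z̄^n}*, T_{z^m z̄^n}]‖ ≤ 1/2` for `m > n`: the self-commutator quadratic
form of the Toeplitz operator with symbol `z^m z̄^n` on the Bergman space, expressed in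
the orthonormal basis coefficients `u_k`, is bounded by `(1/2)·Σ|u_k|²`. -/
theorem commutator_norm_le_half (m n : ℕ) (h : n < m) (u : ℕ → ℂ)
    (hu : Summable fun k : ℕ => ‖u k‖ ^ 2) :
    (∑ k ∈ Finset.range (m - n),
        ((k : ℝ) + m - n + 1) * ((k : ℝ) + 1) / ((k : ℝ) + m + 1) ^ 2 * ‖u k‖ ^ 2)
      + (∑' k : ℕ,
          (((k + (m - n) : ℕ) + m - n + 1 : ℝ) / (((k + (m - n) : ℕ) : ℝ) + m + 1) ^ 2
            - (((k + (m - n) : ℕ) : ℝ) + n - m + 1)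
                / (((k + (m - n) : ℕ) : ℝ) + n + 1) ^ 2)
          * (((k + (m - n) : ℕ) : ℝ) + 1) * ‖u (k + (m - n))‖ ^ 2)
      ≤ (1 / 2) * ∑' k : ℕ, ‖u k‖ ^ 2 := by
  have hd : ((m - n : ℕ) : ℝ) = m - n := Nat.cast_sub h.le
  have hnm : (n : ℝ) ≤ m := by exact_mod_cast h.le
  rw [← hu.sum_add_tsum_nat_add (m - n), mul_add, Finset.mul_sum]
  refine add_le_add (Finset.sum_le_sum fun k hk => ?_) ?_
  · have hk : (k : ℝ) + 1 ≤ m - n := by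
      rw [← hd]; exact_mod_cast Finset.mem_range.mp hk
    exact mul_le_mul_of_nonneg_right
      (head_coeff_le_half k.cast_nonneg n.cast_nonneg hk) (sq_nonneg _)
  · have hshift (k : ℕ) : (m : ℝ) - n ≤ ((k + (m - n) : ℕ) : ℝ) + 1 := by
      push_cast [hd]; linarith [k.cast_nonneg (α := ℝ)]
    exact tsum_mul_le_mul_tsum_of_le
      (fun _ => tail_coeff_nonneg (Nat.cast_nonneg _) n.cast_nonneg hnm)
      (fun k => tail_coeff_le_half (Nat.cast_nonneg _) n.cast_nonneg hnm (hshift k))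
      (fun _ => sq_nonneg _) ((summable_nat_add_iff (m - n)).mpr hu)
end
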